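/- Let h: R^{m×n} → R^q satisfy the blanket assumption (smooth, orthogonally invariant, Dh full rank q on H = h^{-1}(0)). Given X ∈ H with X = HV^T, H ∈ R^{m×s}, V ∈ St(n,s), the tangent space decomposes as T_X H = (T_H H^s)V^T ⊕ (R^{m×(n−s)})V_⊥^T, i.e., T_X H = {KV^T + BV_⊥^T : K ∈ T_H H^s, B ∈ R^{m×(n−s)}}, where H^s is the level set of h^s = h∘i^s. Moreover, N_X H = (N_H H^s)V^T. -/

import Mathlib

open Matrix

noncomputable section
attribute [local instance] Matrix.normedAddCommGroup Matrix.normedSpace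

/-- The natural embedding `i^s : ℝ^{m×s} → ℝ^{m×n}`, `H ↦ [H 0]`. -/
def pad {m : ℕ} (s n : ℕ) (H : Matrix (Fin m) (Fin s) ℝ) : Matrix (Fin m) (Fin n) ℝ :=
  Matrix.of fun i j => if hj : (j : ℕ) < s then H i ⟨j, hj⟩ else 0

def mulRightCLM {m a b : ℕ} (A : Matrix (Fin a) (Fin b) ℝ) :
    Matrix (Fin m) (Fin a) ℝ →L[ℝ] Matrix (Fin m) (Fin b) ℝ :=
  LinearMap.toContinuousLinearMap
    { toFun := fun Z => Z * A
      map_add' := fun Z W => Matrix.add_mul Z W A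
      map_smul' := fun c Z => Matrix.smul_mul c Z A }

@[simp] lemma mulRightCLM_apply {m a b : ℕ} (A : Matrix (Fin a) (Fin b) ℝ)
    (Z : Matrix (Fin m) (Fin a) ℝ) : mulRightCLM A Z = Z * A := rfl

lemma fderiv_mulRight {m a b q : ℕ} (f : Matrix (Fin m) (Fin b) ℝ → Fin q → ℝ)
    (hf : Differentiable ℝ f) (A : Matrix (Fin a) (Fin b) ℝ) (W : Matrix (Fin m) (Fin a) ℝ) :
    fderiv ℝ (fun Z => f (Z * A)) W = (fderiv ℝ f (W * A)).comp (mulRightCLM A) := by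
  have h1 : HasFDerivAt (fun Z : Matrix (Fin m) (Fin a) ℝ => Z * A) (mulRightCLM A) W :=
    (mulRightCLM A).hasFDerivAt
  exact ((hf (W * A)).hasFDerivAt.comp W h1).fderiv

variable {m n q s : ℕ}

def Emat (s n : ℕ) : Matrix (Fin s) (Fin n) ℝ :=
  Matrix.of fun k j => if (j : ℕ) = (k : ℕ) then 1 else 0

def Fmat (s n : ℕ) : Matrix (Fin (n - s)) (Fin n) ℝ :=
  Matrix.of fun k j => if (j : ℕ) = s + (k : ℕ) then 1 else 0

lemma EEt (hsn : s ≤ n) : Emat s n * (Emat s n)ᵀ = (1 : Matrix (Fin s) (Fin s) ℝ) := by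
  ext k k'
  simp only [Matrix.mul_apply, Emat, Matrix.transpose_apply, Matrix.of_apply, Matrix.one_apply]
  rw [Finset.sum_eq_single (Fin.castLE hsn k)]
  · rcases eq_or_ne k k' with rfl | hne
    · simp
    · have h2 : ¬ ((k:ℕ) = (k':ℕ)) := fun hc => hne (Fin.ext hc)
      simp [h2, hne]
  · intro j _ hj
    have : ¬ (j : ℕ) = (k : ℕ) := by
      intro hc
      exact hj (Fin.ext (by simp [hc]))
    simp [this]
  · simp

lemma FFt (hsn : s ≤ n) : Fmat s n * (Fmat s n)ᵀ = (1 : Matrix (Fin (n-s)) (Fin (n-s)) ℝ) := by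
  ext k k'
  simp only [Matrix.mul_apply, Fmat, Matrix.transpose_apply, Matrix.of_apply, Matrix.one_apply]
  have hk : s + (k : ℕ) < n := by omega
  rw [Finset.sum_eq_single (⟨s + k, hk⟩ : Fin n)]
  · rcases eq_or_ne k k' with rfl | hne
    · simp
    · have : ¬ (s + (k:ℕ)) = s + (k' : ℕ) := by
        intro hc; exact hne (Fin.ext (by omega))
      simp [this, hne]
      exact fun hc => hne (Fin.ext (by omega))
  · intro j _ hj
    have : ¬ (j : ℕ) = s + (k : ℕ) := by
      intro hc; exact hj (Fin.ext (by simp [hc]))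
    simp [this]
  · simp

lemma EFt : Emat s n * (Fmat s n)ᵀ = 0 := by
  ext k k'
  simp only [Matrix.mul_apply, Emat, Fmat, Matrix.transpose_apply, Matrix.of_apply,
    Matrix.zero_apply]
  apply Finset.sum_eq_zero
  intro j _
  rcases eq_or_ne ((j:ℕ)) ((k:ℕ)) with hc | hc
  · have : ¬ (j : ℕ) = s + (k' : ℕ) := by omega
    simp [this]
  · simp [hc]

lemma EtE_FtF : (Emat s n)ᵀ * Emat s n + (Fmat s n)ᵀ * Fmat s n
    = (1 : Matrix (Fin n) (Fin n) ℝ) := by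
  ext j j'
  simp only [Matrix.add_apply, Matrix.mul_apply, Emat, Fmat, Matrix.transpose_apply,
    Matrix.of_apply, Matrix.one_apply]
  by_cases hj : (j : ℕ) < s
  · rw [Finset.sum_eq_single (⟨j, hj⟩ : Fin s)]
    · have h0 : ∀ k : Fin (n - s), ¬ ((j:ℕ) = s + (k:ℕ)) := fun k => by omega
      rw [Finset.sum_eq_zero (fun k _ => by simp [h0 k])]
      rcases eq_or_ne j j' with rfl | hne
      · simp
      · have h2 : ¬ ((j:ℕ) = (j':ℕ)) := fun hc => hne (Fin.ext hc)
        have h3 : ¬ ((j':ℕ) = (j:ℕ)) := fun hc => h2 hc.symm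
        simp [h2, h3, hne]
    · intro k _ hk
      have : ¬ (j : ℕ) = (k : ℕ) := fun hc => hk (Fin.ext (by simp [hc]))
      simp [this]
    · simp
  · have hj2 : (j:ℕ) - s < n - s := by have := j.isLt; omega
    have hs1 : (∑ k : Fin s, (if (j:ℕ) = (k:ℕ) then (1:ℝ) else 0) *
        (if (j':ℕ) = (k:ℕ) then 1 else 0)) = 0 :=
      Finset.sum_eq_zero fun k _ => by
        have : ¬ (j:ℕ) = (k:ℕ) := by have := k.isLt; omega
        simp [this]
    rw [hs1, zero_add, Finset.sum_eq_single (⟨(j:ℕ) - s, hj2⟩ : Fin (n - s))]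
    · have h1 : (j:ℕ) = s + ((j:ℕ) - s) := by omega
      rcases eq_or_ne j j' with rfl | hne
      · simp [← h1]
      · have h4 : ¬ ((j':ℕ) = s + ((j:ℕ) - s)) := by
          intro hc; exact hne (Fin.ext (by omega))
        have h5 : ¬ ((j':ℕ) = (j:ℕ)) := by omega
        simp [← h1, h4, h5, hne]
    · intro k _ hk
      have : ¬ (j : ℕ) = s + (k : ℕ) := by
        intro hc; exact hk (Fin.ext (by simp only [hc]; omega))
      simp [this]
    · simp

lemma pad_eq (H' : Matrix (Fin m) (Fin s) ℝ) : pad s n H' = H' * Emat s n := by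
  ext i j
  simp only [pad, Emat, Matrix.mul_apply, Matrix.of_apply]
  by_cases hj : (j : ℕ) < s
  · rw [dif_pos hj, Finset.sum_eq_single (⟨j, hj⟩ : Fin s)]
    · simp
    · intro k _ hk
      have : ¬ (j : ℕ) = (k : ℕ) := fun hc => hk (Fin.ext (by simp [hc]))
      simp [this]
    · simp
  · rw [dif_neg hj, eq_comm]
    apply Finset.sum_eq_zero
    intro k _
    have : ¬ (j:ℕ) = (k:ℕ) := by have := k.isLt; omega
    simp [this]

lemma eq_zero_of_trace {a b : ℕ} (M : Matrix (Fin a) (Fin b) ℝ)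
    (h : (Mᵀ * M).trace = 0) : M = 0 := by
  have ht : (Mᵀ * M).trace = ∑ j : Fin b, ∑ i : Fin a, M i j * M i j := by
    simp [Matrix.trace, Matrix.mul_apply, Matrix.diag]
  rw [ht] at h
  have hnn : ∀ j : Fin b, (0:ℝ) ≤ ∑ i : Fin a, M i j * M i j :=
    fun j => Finset.sum_nonneg fun i _ => mul_self_nonneg _
  ext i j
  have h1 := (Finset.sum_eq_zero_iff_of_nonneg (fun j _ => hnn j)).1 h j (Finset.mem_univ j)
  have h2 := (Finset.sum_eq_zero_iff_of_nonneg
    (fun i _ => mul_self_nonneg (M i j))).1 h1 i (Finset.mem_univ i)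
  simpa using mul_self_eq_zero.1 h2

/-- Under the blanket assumption, with `X = H Vᵀ ∈ H`, the tangent
space decomposes as `T_X H = (T_H Hˢ) Vᵀ ⊕ ℝ^{m×(n−s)} V⊥ᵀ`, and the normal space
(the Frobenius-orthogonal complement of the kernel of the differential) satisfies
`N_X H = (N_H Hˢ) Vᵀ`. -/
theorem prop_decompose_geo_H {m n q s : ℕ} (hsn : s ≤ n)
    (h : Matrix (Fin m) (Fin n) ℝ → (Fin q → ℝ))
    (hsmooth : ContDiff ℝ (⊤ : ℕ∞) h)
    (hinv : ∀ (X : Matrix (Fin m) (Fin n) ℝ) (Q : Matrix (Fin n) (Fin n) ℝ),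
      Qᵀ * Q = 1 → h (X * Q) = h X)
    (hfullrank : ∀ X : Matrix (Fin m) (Fin n) ℝ, h X = 0 →
      Function.Surjective (fderiv ℝ h X))
    (X : Matrix (Fin m) (Fin n) ℝ) (hX : h X = 0)
    (H : Matrix (Fin m) (Fin s) ℝ) (V : Matrix (Fin n) (Fin s) ℝ)
    (Vb : Matrix (Fin n) (Fin (n - s)) ℝ)
    (hV : Vᵀ * V = 1) (hdecomp : X = H * Vᵀ)
    (hVVb : Vᵀ * Vb = 0) (hVb : Vbᵀ * Vb = 1)
    (hcompl : V * Vᵀ + Vb * Vbᵀ = 1) :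
    (LinearMap.ker ((fderiv ℝ h X :
      Matrix (Fin m) (Fin n) ℝ →L[ℝ] Fin q → ℝ) : Matrix (Fin m) (Fin n) ℝ →ₗ[ℝ] Fin q → ℝ) : Set (Matrix (Fin m) (Fin n) ℝ)) =
      {Z | ∃ (K : Matrix (Fin m) (Fin s) ℝ) (B : Matrix (Fin m) (Fin (n - s)) ℝ),
        K ∈ LinearMap.ker ((fderiv ℝ (fun H' => h (pad s n H')) H :
          Matrix (Fin m) (Fin s) ℝ →L[ℝ] Fin q → ℝ) : Matrix (Fin m) (Fin s) ℝ →ₗ[ℝ] Fin q → ℝ) ∧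
        Z = K * Vᵀ + B * Vbᵀ} ∧
    {Y | ∀ Z ∈ LinearMap.ker ((fderiv ℝ h X :
        Matrix (Fin m) (Fin n) ℝ →L[ℝ] Fin q → ℝ) : Matrix (Fin m) (Fin n) ℝ →ₗ[ℝ] Fin q → ℝ),
        (Zᵀ * Y).trace = 0} =
      {Y | ∃ N : Matrix (Fin m) (Fin s) ℝ,
        (∀ K ∈ LinearMap.ker ((fderiv ℝ (fun H' => h (pad s n H')) H :
            Matrix (Fin m) (Fin s) ℝ →L[ℝ] Fin q → ℝ) : Matrix (Fin m) (Fin s) ℝ →ₗ[ℝ] Fin q → ℝ),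
          (Kᵀ * N).trace = 0) ∧ Y = N * Vᵀ} := by
  --

  have hd : Differentiable ℝ h := hsmooth.differentiable (by simp)
  obtain ⟨E, F, hEE, hFF, hEF, hsum, hpad⟩ :
      ∃ (E : Matrix (Fin s) (Fin n) ℝ) (F : Matrix (Fin (n - s)) (Fin n) ℝ),
        E * Eᵀ = 1 ∧ F * Fᵀ = 1 ∧ E * Fᵀ = 0 ∧ Eᵀ * E + Fᵀ * F = 1 ∧
        ∀ H' : Matrix (Fin m) (Fin s) ℝ, pad s n H' = H' * E :=
    ⟨Emat s n, Fmat s n, EEt hsn, FFt hsn, EFt, EtE_FtF, fun H' => pad_eq H'⟩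
  have hFE : F * Eᵀ = 0 := by
    have := congrArg Matrix.transpose hEF
    simpa [Matrix.transpose_mul] using this
  have hVbV : Vbᵀ * V = 0 := by
    have := congrArg Matrix.transpose hVVb
    simpa [Matrix.transpose_mul] using this
  -- cancellation helpers
  have hVl : ∀ {c : ℕ} (A : Matrix (Fin s) (Fin c) ℝ), Vᵀ * (V * A) = A := by
    intro c A; rw [← Matrix.mul_assoc, hV, Matrix.one_mul]
  have hVbl : ∀ {c : ℕ} (A : Matrix (Fin (n - s)) (Fin c) ℝ), Vbᵀ * (Vb * A) = A := by
    intro c A; rw [← Matrix.mul_assoc, hVb, Matrix.one_mul]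
  have hVVbl : ∀ {c : ℕ} (A : Matrix (Fin (n - s)) (Fin c) ℝ), Vᵀ * (Vb * A) = 0 := by
    intro c A; rw [← Matrix.mul_assoc, hVVb, Matrix.zero_mul]
  have hVbVl : ∀ {c : ℕ} (A : Matrix (Fin s) (Fin c) ℝ), Vbᵀ * (V * A) = 0 := by
    intro c A; rw [← Matrix.mul_assoc, hVbV, Matrix.zero_mul]
  have hEEl : ∀ {c : ℕ} (A : Matrix (Fin s) (Fin c) ℝ), E * (Eᵀ * A) = A := by
    intro c A; rw [← Matrix.mul_assoc, hEE, Matrix.one_mul]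
  have hFFl : ∀ {c : ℕ} (A : Matrix (Fin (n - s)) (Fin c) ℝ), F * (Fᵀ * A) = A := by
    intro c A; rw [← Matrix.mul_assoc, hFF, Matrix.one_mul]
  have hEFl : ∀ {c : ℕ} (A : Matrix (Fin (n - s)) (Fin c) ℝ), E * (Fᵀ * A) = 0 := by
    intro c A; rw [← Matrix.mul_assoc, hEF, Matrix.zero_mul]
  have hFEl : ∀ {c : ℕ} (A : Matrix (Fin s) (Fin c) ℝ), F * (Eᵀ * A) = 0 := by
    intro c A; rw [← Matrix.mul_assoc, hFE, Matrix.zero_mul]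
  set Q0 : Matrix (Fin n) (Fin n) ℝ := V * E + Vb * F with hQ0def
  have hQ0 : Q0ᵀ * Q0 = 1 := by
    simp only [hQ0def, Matrix.transpose_add, Matrix.transpose_mul, Matrix.add_mul,
      Matrix.mul_add, Matrix.mul_assoc, hVl, hVbl, hVVbl, hVbVl, Matrix.mul_zero,
      add_zero, zero_add]
    exact hsum
  have hXQ0 : X * Q0 = pad s n H := by
    rw [hdecomp, hpad, hQ0def]
    simp only [Matrix.mul_add, Matrix.mul_assoc, hVl, hVVbl, Matrix.mul_zero, add_zero]
  set D := fderiv ℝ h (pad s n H) with hDdef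
  have hDh : fderiv ℝ h X = D.comp (mulRightCLM Q0) := by
    have hfun : h = fun Z => h (Z * Q0) := funext fun Z => (hinv Z Q0 hQ0).symm
    conv_lhs => rw [hfun]
    rw [fderiv_mulRight h hd Q0 X, hXQ0]
  have hDs : fderiv ℝ (fun H' => h (pad s n H')) H = D.comp (mulRightCLM E) := by
    simp only [hpad]
    rw [fderiv_mulRight h hd E H, hDdef, hpad]
  -- derivative vanishes in the F directions
  have hDF : ∀ B : Matrix (Fin m) (Fin (n - s)) ℝ, D (B * F) = 0 := by
    have hQ1 : (Eᵀ * E - Fᵀ * F)ᵀ * (Eᵀ * E - Fᵀ * F) = 1 := by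
      simp only [Matrix.transpose_sub, Matrix.transpose_mul, Matrix.transpose_transpose,
        Matrix.sub_mul, Matrix.mul_sub, Matrix.mul_assoc, hEEl, hFFl, hEFl, hFEl,
        Matrix.mul_zero, sub_zero, zero_sub, sub_neg_eq_add]
      exact hsum
    have heven : ∀ C : Matrix (Fin m) (Fin (n - s)) ℝ,
        h (pad s n H + (-C) * F) = h (pad s n H + C * F) := by
      intro C
      have hmul : (pad s n H + C * F) * (Eᵀ * E - Fᵀ * F) = pad s n H + (-C) * F := by
        rw [hpad]
        simp only [Matrix.add_mul, Matrix.mul_add, Matrix.mul_sub, Matrix.sub_mul,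
          Matrix.mul_neg, Matrix.neg_mul, Matrix.mul_assoc, hEEl, hFFl, hEFl, hFEl,
          Matrix.mul_zero, Matrix.zero_mul, neg_zero, add_zero, zero_add,
          sub_eq_add_neg, sub_zero, zero_sub]
      rw [← hmul, hinv _ _ hQ1]
    have hg : HasFDerivAt (fun C : Matrix (Fin m) (Fin (n - s)) ℝ => h (pad s n H + C * F))
        (D.comp (mulRightCLM F)) 0 := by
      have h1 : HasFDerivAt (fun C : Matrix (Fin m) (Fin (n - s)) ℝ => pad s n H + C * F)
          (mulRightCLM F) 0 := ((mulRightCLM F).hasFDerivAt).const_add _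
      have h2 : HasFDerivAt h D
          ((fun C : Matrix (Fin m) (Fin (n - s)) ℝ => pad s n H + C * F) 0) := by
        rw [hDdef]
        simpa using (hd (pad s n H)).hasFDerivAt
      exact h2.comp 0 h1
    have hneg : HasFDerivAt (fun C : Matrix (Fin m) (Fin (n - s)) ℝ => -C)
        (-(ContinuousLinearMap.id ℝ (Matrix (Fin m) (Fin (n - s)) ℝ))) 0 := by
      exact (hasFDerivAt_id (0 : Matrix (Fin m) (Fin (n - s)) ℝ)).neg
    have hg' : HasFDerivAt (fun C : Matrix (Fin m) (Fin (n - s)) ℝ => h (pad s n H + C * F))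
        (D.comp (mulRightCLM F))
        ((fun C : Matrix (Fin m) (Fin (n - s)) ℝ => -C) 0) := by
      simpa using hg
    have hgneg : HasFDerivAt (fun C : Matrix (Fin m) (Fin (n - s)) ℝ => h (pad s n H + (-C) * F))
        ((D.comp (mulRightCLM F)).comp
          (-(ContinuousLinearMap.id ℝ (Matrix (Fin m) (Fin (n - s)) ℝ)))) 0 :=
      hg'.comp 0 hneg
    have hfeq : (fun C : Matrix (Fin m) (Fin (n - s)) ℝ => h (pad s n H + (-C) * F)) =
        (fun C : Matrix (Fin m) (Fin (n - s)) ℝ => h (pad s n H + C * F)) :=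
      funext heven
    rw [hfeq] at hgneg
    have huniq := hgneg.unique hg
    intro B
    have happ := DFunLike.congr_fun huniq B
    simp only [ContinuousLinearMap.coe_comp', Function.comp_apply,
      ContinuousLinearMap.neg_apply, ContinuousLinearMap.id_apply, mulRightCLM_apply,
      Matrix.neg_mul, map_neg] at happ
    funext i
    have := congrFun happ i
    simp only [Pi.neg_apply] at this
    have h0 : D (B * F) i = 0 := by linarith
    simpa using h0
  have hkerX : ∀ Z, ((fderiv ℝ h X : Matrix (Fin m) (Fin n) ℝ →L[ℝ] Fin q → ℝ) :
      Matrix (Fin m) (Fin n) ℝ →ₗ[ℝ] Fin q → ℝ) Z = D (Z * Q0) := by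
    intro Z; rw [hDh]; rfl
  have hkerH : ∀ K, ((fderiv ℝ (fun H' => h (pad s n H')) H : Matrix (Fin m) (Fin s) ℝ →L[ℝ] Fin q → ℝ) :
      Matrix (Fin m) (Fin s) ℝ →ₗ[ℝ] Fin q → ℝ) K = D (K * E) := by
    intro K; rw [hDs]; rfl
  have hDdecomp : ∀ Z : Matrix (Fin m) (Fin n) ℝ, D Z = D ((Z * Eᵀ) * E) := by
    intro Z
    have hZ : (Z * Eᵀ) * E + (Z * Fᵀ) * F = Z := by
      rw [Matrix.mul_assoc, Matrix.mul_assoc, ← Matrix.mul_add, hsum, Matrix.mul_one]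
    conv_lhs => rw [← hZ]
    rw [map_add, hDF, add_zero]
  have hQ0E : ∀ Z : Matrix (Fin m) (Fin n) ℝ, (Z * Q0) * Eᵀ = Z * V := by
    intro Z
    rw [hQ0def]
    simp only [Matrix.mul_add, Matrix.add_mul, Matrix.mul_assoc, hEE, hFE,
      Matrix.mul_zero, Matrix.mul_one, add_zero]
  have hKQ0 : ∀ (K : Matrix (Fin m) (Fin s) ℝ) (B : Matrix (Fin m) (Fin (n - s)) ℝ),
      (K * Vᵀ + B * Vbᵀ) * Q0 = K * E + B * F := by
    intro K B
    rw [hQ0def]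
    simp only [Matrix.add_mul, Matrix.mul_add, Matrix.mul_assoc, hVl, hVbl, hVVbl,
      hVbVl, Matrix.mul_zero, add_zero, zero_add]
  have hZV : ∀ Z : Matrix (Fin m) (Fin n) ℝ, (Z * V) * Vᵀ + (Z * Vb) * Vbᵀ = Z := by
    intro Z
    rw [Matrix.mul_assoc, Matrix.mul_assoc, ← Matrix.mul_add, hcompl, Matrix.mul_one]
  have part1 : (LinearMap.ker ((fderiv ℝ h X :
      Matrix (Fin m) (Fin n) ℝ →L[ℝ] Fin q → ℝ) : Matrix (Fin m) (Fin n) ℝ →ₗ[ℝ] Fin q → ℝ) : Set (Matrix (Fin m) (Fin n) ℝ)) =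
      {Z | ∃ (K : Matrix (Fin m) (Fin s) ℝ) (B : Matrix (Fin m) (Fin (n - s)) ℝ),
        K ∈ LinearMap.ker ((fderiv ℝ (fun H' => h (pad s n H')) H :
          Matrix (Fin m) (Fin s) ℝ →L[ℝ] Fin q → ℝ) : Matrix (Fin m) (Fin s) ℝ →ₗ[ℝ] Fin q → ℝ) ∧
        Z = K * Vᵀ + B * Vbᵀ} := by
    ext Z
    simp only [SetLike.mem_coe, LinearMap.mem_ker, Set.mem_setOf_eq, hkerX, hkerH]
    constructor
    · intro hZ
      refine ⟨Z * V, Z * Vb, ?_, (hZV Z).symm⟩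
      have := hDdecomp (Z * Q0)
      rw [hQ0E] at this
      rw [← this, hZ]
    · rintro ⟨K, B, hK, rfl⟩
      rw [hKQ0, map_add, hK, hDF, add_zero]
  refine ⟨part1, ?_⟩
  ext Y
  simp only [Set.mem_setOf_eq, LinearMap.mem_ker, hkerH]
  constructor
  · intro hY
    have hmem : ∀ (K : Matrix (Fin m) (Fin s) ℝ) (B : Matrix (Fin m) (Fin (n - s)) ℝ),
        D (K * E) = 0 → K * Vᵀ + B * Vbᵀ ∈ LinearMap.ker ((fderiv ℝ h X :
      Matrix (Fin m) (Fin n) ℝ →L[ℝ] Fin q → ℝ) : Matrix (Fin m) (Fin n) ℝ →ₗ[ℝ] Fin q → ℝ) := by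
      intro K B hK
      rw [LinearMap.mem_ker, hkerX, hKQ0, map_add, hK, hDF, add_zero]
    have hYVb : Y * Vb = 0 := by
      apply eq_zero_of_trace
      have h0 : D ((0 : Matrix (Fin m) (Fin s) ℝ) * E) = 0 := by
        rw [Matrix.zero_mul, map_zero]
      have := hY _ (hmem 0 (Y * Vb) h0)
      rw [Matrix.zero_mul, zero_add, Matrix.transpose_mul, Matrix.transpose_transpose,
        Matrix.mul_assoc, Matrix.trace_mul_comm, Matrix.mul_assoc] at this
      exact this
    refine ⟨Y * V, ?_, ?_⟩
    · intro K hK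
      have := hY _ (hmem K 0 hK)
      rw [Matrix.zero_mul, add_zero, Matrix.transpose_mul, Matrix.transpose_transpose,
        Matrix.mul_assoc, Matrix.trace_mul_comm, Matrix.mul_assoc] at this
      rw [← Matrix.mul_assoc] at this
      rw [Matrix.mul_assoc] at this
      exact this
    · have := hZV Y
      rw [hYVb, Matrix.zero_mul, add_zero] at this
      exact this.symm
  · rintro ⟨N, hN, rfl⟩
    intro Z hZ
    have hZ2 : Z ∈ (LinearMap.ker ((fderiv ℝ h X :
      Matrix (Fin m) (Fin n) ℝ →L[ℝ] Fin q → ℝ) : Matrix (Fin m) (Fin n) ℝ →ₗ[ℝ] Fin q → ℝ) : Set (Matrix (Fin m) (Fin n) ℝ)) := hZ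
    rw [part1] at hZ2
    obtain ⟨K, B, hK, rfl⟩ := hZ2
    rw [Matrix.transpose_add, Matrix.add_mul, Matrix.trace_add, Matrix.transpose_mul,
      Matrix.transpose_mul, Matrix.transpose_transpose, Matrix.transpose_transpose]
    have t1 : (V * Kᵀ * (N * Vᵀ)).trace = (Kᵀ * N).trace := by
      rw [Matrix.mul_assoc, Matrix.trace_mul_comm, Matrix.mul_assoc, Matrix.mul_assoc,
        hV, Matrix.mul_one]
    have t2 : (Vb * Bᵀ * (N * Vᵀ)).trace = 0 := by
      rw [Matrix.mul_assoc, Matrix.trace_mul_comm]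
      have : Bᵀ * (N * Vᵀ) * Vb = 0 := by
        rw [Matrix.mul_assoc, Matrix.mul_assoc, hVVb, Matrix.mul_zero, Matrix.mul_zero]
      rw [this, Matrix.trace_zero]
    rw [t1, t2, add_zero]
    exact hN K (by rw [LinearMap.mem_ker, hkerH] at hK; exact hK)
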